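/- Let q ∈ [1,∞), let A ∈ L¹(0,2π) be extended 2π-periodically, and set α = (1/(2π))∫₀^{2π} A(t) dt. For any 2π-periodic absolutely continuous u : ℝ → ℂ, define v(x) = u(x)·exp(i∫₀ˣ (A(t) − α) dt). Then v is 2π-periodic and absolutely continuous, |v(x)| = |u(x)| for all x, and ∫₀^{2π} |v'(x) + iαv(x)|² dx = ∫₀^{2π} |u'(x) + iA(x)u(x)|² dx. Consequently μ_q(A) = μ_q(α). -/

import Mathlib

open MeasureTheory Real Set Filter

noncomputable section

/-- `u : ℝ → ℂ` is `2π`-periodic and absolutely continuous, with (a.e.) derivative `g`. -/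
def PeriodicAC (u g : ℝ → ℂ) : Prop :=
  Function.Periodic u (2 * π) ∧
  (∀ a b : ℝ, IntervalIntegrable g volume a b) ∧
  ∀ x : ℝ, u x = u 0 + ∫ t in (0:ℝ)..x, g t

/-- The Rayleigh quotient `‖u' + iAu‖_{L²(0,2π)} / ‖u‖_{L^q(0,2π)}`. -/
def ratio (q : ℝ) (A : ℝ → ℝ) (u g : ℝ → ℂ) : ℝ :=
  (∫ x in (0:ℝ)..(2 * π), ‖g x + Complex.I * A x * u x‖ ^ 2) ^ ((1:ℝ)/2) /
  (∫ x in (0:ℝ)..(2 * π), ‖u x‖ ^ q) ^ (1/q)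

/-- `μ_q(A)`: the infimum of `‖u' + iAu‖_{L²}/‖u‖_{L^q}` over nonzero `2π`-periodic
absolutely continuous `u` (restricted, as one may, to those with `u' + iAu ∈ L²`). -/
def mu (q : ℝ) (A : ℝ → ℝ) : ℝ :=
  sInf { c : ℝ | ∃ u g : ℝ → ℂ, PeriodicAC u g ∧ u ≠ 0 ∧
    IntervalIntegrable (fun x => ‖g x + Complex.I * A x * u x‖ ^ 2)
      volume 0 (2 * π) ∧
    c = ratio q A u g }

namespace GaugeAux

open Complex (I)

/-- `t ↦ exp(I t)` is 1-Lipschitz. -/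
lemma expI_lip (a b : ℝ) :
    ‖Complex.exp (I * a) - Complex.exp (I * b)‖ ≤ |a - b| := by
  have hd : ∀ t ∈ (univ : Set ℝ), HasDerivWithinAt (fun s : ℝ => Complex.exp (I * s))
      (Complex.exp (I * t) * (I * 1)) univ t := by
    intro t _
    exact ((((hasDerivAt_id t).ofReal_comp).const_mul I).cexp).hasDerivWithinAt
  have hb : ∀ t ∈ (univ : Set ℝ), ‖Complex.exp (I * t) * (I * 1)‖ ≤ 1 := by
    intro t _
    simp [Complex.norm_exp]
  have := convex_univ.norm_image_sub_le_of_norm_hasDerivWithin_le hd hb (mem_univ b) (mem_univ a)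
  simpa [Real.norm_eq_abs] using this

lemma II_to_On {E : Type*} [NormedAddCommGroup E] {f : ℝ → E} {a b : ℝ}
    (h : IntervalIntegrable f volume a b) : IntegrableOn f (uIcc a b) volume := by
  rcases le_total a b with hab | hab
  · rw [uIcc_of_le hab]
    exact (intervalIntegrable_iff_integrableOn_Icc_of_le hab).1 h
  · rw [uIcc_of_ge hab]
    exact (intervalIntegrable_iff_integrableOn_Icc_of_le hab).1 h.symm

lemma norm_int_le {E : Type*} [NormedAddCommGroup E] [NormedSpace ℝ E] {f : ℝ → E} {x t : ℝ}
    (ht : t ∈ uIcc (0:ℝ) x) (hf : IntegrableOn f (uIcc (0:ℝ) x) volume) :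
    ‖∫ s in (0:ℝ)..t, f s‖ ≤ ∫ s in uIcc (0:ℝ) x, ‖f s‖ := by
  refine (intervalIntegral.norm_integral_le_integral_norm_uIoc).trans ?_
  refine setIntegral_mono_set hf.norm (Eventually.of_forall fun s => norm_nonneg _) ?_
  refine HasSubset.Subset.eventuallyLE ?_
  exact uIoc_subset_uIcc.trans (uIcc_subset_uIcc left_mem_uIcc ht)

lemma approx {E : Type*} [NormedAddCommGroup E] [NormedSpace ℝ E] {f : ℝ → E} {K : Set ℝ}
    (hK : MeasurableSet K) (hf : IntegrableOn f K volume) {ε : ℝ} (hε : 0 < ε) :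
    ∃ φ : ℝ → E, Continuous φ ∧ ∫ t in K, ‖f t - φ t‖ ≤ ε := by
  have hind : Integrable (K.indicator f) volume := (integrable_indicator_iff hK).2 hf
  obtain ⟨φ, -, hφ1, hφc, hφi⟩ := hind.exists_hasCompactSupport_integral_sub_le hε
  refine ⟨φ, hφc, ?_⟩
  have h1 : ∫ t in K, ‖f t - φ t‖ = ∫ t in K, ‖K.indicator f t - φ t‖ :=
    setIntegral_congr_fun hK (fun t ht => by rw [indicator_of_mem ht])
  rw [h1]
  exact (setIntegral_le_integral ((hind.sub hφi).norm)
    (Eventually.of_forall fun t => norm_nonneg _)).trans hφ1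

lemma II_congr_pts {f : ℝ → ℝ} {a b a' b' : ℝ} (h : IntervalIntegrable f volume a b)
    (ha : a = a') (hb : b = b') : IntervalIntegrable f volume a' b' := ha ▸ hb ▸ h

/-- Periodic + integrable on one period ⇒ interval integrable everywhere. -/
lemma per_II {f : ℝ → ℝ} {T : ℝ} (hT : 0 < T) (hf : Function.Periodic f T)
    (h : IntervalIntegrable f volume 0 T) : ∀ a c : ℝ, IntervalIntegrable f volume a c := by
  have step1 : ∀ n : ℤ, IntervalIntegrable f volume (n * T) (n * T + T) := by
    intro n
    have h2 := h.comp_add_right (-(n * T))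
    have heq : (fun x => f (x + -(n * T))) = f := funext fun y => by
      have := hf.sub_int_mul_eq (x := y) n
      simpa [sub_eq_add_neg] using this
    rw [heq] at h2
    have h0 : (0:ℝ) - -(n * T) = n * T := by ring
    have h1 : (T:ℝ) - -(n * T) = n * T + T := by ring
    rwa [h0, h1] at h2
  have step2 : ∀ n : ℕ, IntervalIntegrable f volume (-(n * T)) (n * T) := by
    intro n
    induction n with
    | zero => simp
    | succ k ih =>
      have hl : IntervalIntegrable f volume (-((((k:ℕ):ℝ)+1) * T)) (-(((k:ℕ):ℝ) * T)) :=
        II_congr_pts (step1 (-(k + 1))) (by push_cast; ring) (by push_cast; ring)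
      have hr : IntervalIntegrable f volume (((k:ℕ):ℝ) * T) ((((k:ℕ):ℝ)+1) * T) :=
        II_congr_pts (step1 (k : ℤ)) (by push_cast; ring) (by push_cast; ring)
      exact II_congr_pts ((hl.trans ih).trans hr) (by push_cast; ring) (by push_cast; ring)
  intro a c
  obtain ⟨n, hn⟩ := exists_nat_ge (max |a| |c| / T)
  have hnT : max |a| |c| ≤ n * T := by
    rw [div_le_iff₀ hT] at hn
    linarith
  have ha : |a| ≤ n * T := (le_max_left _ _).trans hnT
  have hc : |c| ≤ n * T := (le_max_right _ _).trans hnT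
  have hTn : (0:ℝ) ≤ n * T := (abs_nonneg a).trans ha
  refine (step2 n).mono_set ?_
  rw [Set.uIcc_subset_uIcc_iff_le]
  have hmm : -(n * T) ≤ (n:ℝ) * T := by linarith
  rw [min_eq_left hmm, max_eq_right hmm]
  refine ⟨le_min ?_ ?_, max_le ?_ ?_⟩
  · linarith [neg_abs_le a]
  · linarith [neg_abs_le c]
  · linarith [le_abs_self a]
  · linarith [le_abs_self c]

end GaugeAux

namespace GaugeAux

open Complex (I)

/-- Integrability of the gauged derivative. -/
lemma gvII {u g : ℝ → ℂ} {b : ℝ → ℝ} {E : ℝ → ℂ}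
    (hg : ∀ a c : ℝ, IntervalIntegrable g volume a c)
    (huc : Continuous u)
    (hb : ∀ a c : ℝ, IntervalIntegrable b volume a c)
    (hEc : Continuous E) :
    ∀ a c : ℝ, IntervalIntegrable (fun t => (g t + I * b t * u t) * E t) volume a c := by
  intro a c
  have h1 : IntervalIntegrable (fun t => g t * E t) volume a c :=
    (hg a c).mul_continuousOn hEc.continuousOn
  have h2 : IntervalIntegrable (fun t => ((b t : ℝ) : ℂ) * (I * u t * E t)) volume a c := by
    refine IntervalIntegrable.mul_continuousOn ⟨(hb a c).1.ofReal, (hb a c).2.ofReal⟩ ?_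
    exact (Continuous.continuousOn (by continuity))
  have heq : (fun t => (g t + I * b t * u t) * E t)
      = fun t => g t * E t + ((b t : ℝ) : ℂ) * (I * u t * E t) := funext fun t => by ring
  rw [heq]
  exact h1.add h2

lemma normE (r : ℝ) : ‖Complex.exp (I * (r : ℂ))‖ = 1 := by
  simp [Complex.norm_exp]

set_option maxHeartbeats 1000000 in
/-- The key gauge identity. -/
lemma gauge_key (u g : ℝ → ℂ) (hg : ∀ a c : ℝ, IntervalIntegrable g volume a c)
    (hu : ∀ x : ℝ, u x = u 0 + ∫ t in (0:ℝ)..x, g t)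
    (b : ℝ → ℝ) (hb : ∀ a c : ℝ, IntervalIntegrable b volume a c) (x : ℝ) :
    u x * Complex.exp (I * ((∫ t in (0:ℝ)..x, b t : ℝ) : ℂ)) =
      u 0 + ∫ t in (0:ℝ)..x, (g t + I * b t * u t) *
        Complex.exp (I * ((∫ s in (0:ℝ)..t, b s : ℝ) : ℂ)) := by
  set B : ℝ → ℝ := fun t => ∫ s in (0:ℝ)..t, b s with hB
  set E : ℝ → ℂ := fun t => Complex.exp (I * (B t : ℂ)) with hE
  have hBc : Continuous B := intervalIntegral.continuous_primitive hb 0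
  have hEc : Continuous E :=
    Complex.continuous_exp.comp (continuous_const.mul (Complex.continuous_ofReal.comp hBc))
  have huc : Continuous u := by
    have h1 : Continuous fun y => u 0 + ∫ t in (0:ℝ)..y, g t :=
      continuous_const.add (intervalIntegral.continuous_primitive hg 0)
    exact h1.congr fun y => (hu y).symm
  set K : Set ℝ := uIcc (0:ℝ) x with hK
  have hKmeas : MeasurableSet K := measurableSet_uIcc
  have hxK : x ∈ K := right_mem_uIcc
  have hgK : IntegrableOn g K volume := II_to_On (hg 0 x)
  have hbK : IntegrableOn b K volume := II_to_On (hb 0 x)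
  obtain ⟨M₀, hM₀⟩ := isCompact_uIcc.exists_bound_of_continuousOn huc.continuousOn
  set M : ℝ := max M₀ 0 with hM
  have hM0 : 0 ≤ M := le_max_right _ _
  have hMu : ∀ t ∈ K, ‖u t‖ ≤ M := fun t ht => (hM₀ t ht).trans (le_max_left _ _)
  set Mg : ℝ := ∫ t in K, ‖g t‖ with hMg
  set Mb : ℝ := ∫ t in K, ‖b t‖ with hMb
  have hMg0 : 0 ≤ Mg := setIntegral_nonneg hKmeas fun t _ => norm_nonneg _
  have hMb0 : 0 ≤ Mb := setIntegral_nonneg hKmeas fun t _ => norm_nonneg _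
  set f : ℝ → ℂ := fun t => (g t + I * b t * u t) * E t with hf
  have hfII : ∀ a c : ℝ, IntervalIntegrable f volume a c := gvII hg huc hb hEc
  set C : ℝ := M + 2 + Mg + (M + 1) + Mb * (1 + M) with hC
  have hC0 : 0 ≤ C := by positivity
  set D : ℂ := u x * E x - (u 0 + ∫ t in (0:ℝ)..x, f t) with hD
  have claim : ∀ ε : ℝ, 0 < ε → ε ≤ 1 → ‖D‖ ≤ ε * C := by
    intro ε hε hε1
    obtain ⟨gc, hgcc, hgce⟩ := approx hKmeas hgK hε
    obtain ⟨bc, hbcc, hbce⟩ := approx hKmeas hbK hε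
    set u₁ : ℝ → ℂ := fun t => u 0 + ∫ s in (0:ℝ)..t, gc s with hu₁
    set B₁ : ℝ → ℝ := fun t => ∫ s in (0:ℝ)..t, bc s with hB₁
    set E₁ : ℝ → ℂ := fun t => Complex.exp (I * (B₁ t : ℂ)) with hE₁
    have hu₁c : Continuous u₁ := continuous_const.add
      (intervalIntegral.continuous_primitive (fun a c => hgcc.intervalIntegrable a c) 0)
    have hB₁c : Continuous B₁ :=
      intervalIntegral.continuous_primitive (fun a c => hbcc.intervalIntegrable a c) 0
    have hE₁c : Continuous E₁ :=
      Complex.continuous_exp.comp (continuous_const.mul (Complex.continuous_ofReal.comp hB₁c))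
    have hu₁d : ∀ t : ℝ, HasDerivAt u₁ (gc t) t := fun t =>
      ((hgcc.integral_hasStrictDerivAt 0 t).hasDerivAt).const_add (u 0)
    have hE₁d : ∀ t : ℝ, HasDerivAt E₁ (E₁ t * (I * bc t)) t := by
      intro t
      exact ((((hbcc.integral_hasStrictDerivAt 0 t).hasDerivAt).ofReal_comp).const_mul I).cexp
    set f₁ : ℝ → ℂ := fun t => gc t * E₁ t + u₁ t * (E₁ t * (I * bc t)) with hf₁
    have hf₁c : Continuous f₁ := by
      apply Continuous.add
      · exact hgcc.mul hE₁c
      · exact hu₁c.mul (hE₁c.mul (continuous_const.mul (Complex.continuous_ofReal.comp hbcc)))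
    have hFTC : ∫ t in (0:ℝ)..x, f₁ t = u₁ x * E₁ x - u₁ 0 * E₁ 0 :=
      intervalIntegral.integral_eq_sub_of_hasDerivAt
        (fun t _ => (hu₁d t).mul (hE₁d t)) (hf₁c.intervalIntegrable 0 x)
    have hB₁0 : B₁ 0 = 0 := intervalIntegral.integral_same
    have hv₁0 : u₁ 0 * E₁ 0 = u 0 := by
      simp [hu₁, hE₁, hB₁0, intervalIntegral.integral_same]
    -- pointwise estimates on K
    have h_ub : ∀ t ∈ K, ‖u₁ t - u t‖ ≤ ε := by
      intro t ht
      have he : u₁ t - u t = ∫ s in (0:ℝ)..t, (gc s - g s) := by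
        rw [hu t, intervalIntegral.integral_sub (hgcc.intervalIntegrable 0 t) (hg 0 t)]
        simp [hu₁]
      rw [he]
      have hint : IntegrableOn (fun s => gc s - g s) K volume :=
        II_to_On ((hgcc.intervalIntegrable 0 x).sub (hg 0 x))
      refine (norm_int_le ht hint).trans ?_
      have : ∫ s in K, ‖gc s - g s‖ = ∫ s in K, ‖g s - gc s‖ :=
        setIntegral_congr_fun hKmeas fun s _ => norm_sub_rev _ _
      rw [this]; exact hgce
    have h_Bb : ∀ t ∈ K, ‖B₁ t - B t‖ ≤ ε := by
      intro t ht
      have he : B₁ t - B t = ∫ s in (0:ℝ)..t, (bc s - b s) := by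
        rw [hB, hB₁]
        simp only
        rw [intervalIntegral.integral_sub (hbcc.intervalIntegrable 0 t) (hb 0 t)]
      rw [he]
      have hint : IntegrableOn (fun s => bc s - b s) K volume :=
        II_to_On ((hbcc.intervalIntegrable 0 x).sub (hb 0 x))
      refine (norm_int_le ht hint).trans ?_
      have : ∫ s in K, ‖bc s - b s‖ = ∫ s in K, ‖b s - bc s‖ :=
        setIntegral_congr_fun hKmeas fun s _ => norm_sub_rev _ _
      rw [this]; exact hbce
    have h_E : ∀ t ∈ K, ‖E₁ t - E t‖ ≤ ε := by
      intro t ht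
      refine (expI_lip (B₁ t) (B t)).trans ?_
      simpa [Real.norm_eq_abs] using h_Bb t ht
    have h_E1 : ∀ t : ℝ, ‖E₁ t‖ = 1 := fun t => normE (B₁ t)
    have h_E0 : ∀ t : ℝ, ‖E t‖ = 1 := fun t => normE (B t)
    have h_u1 : ∀ t ∈ K, ‖u₁ t‖ ≤ M + 1 := by
      intro t ht
      calc ‖u₁ t‖ = ‖u t + (u₁ t - u t)‖ := by ring_nf
        _ ≤ ‖u t‖ + ‖u₁ t - u t‖ := norm_add_le _ _
        _ ≤ M + ε := add_le_add (hMu t ht) (h_ub t ht)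
        _ ≤ M + 1 := by linarith
    have hsplit : D = (u x * E x - u₁ x * E₁ x) + ∫ t in (0:ℝ)..x, (f₁ t - f t) := by
      rw [intervalIntegral.integral_sub (hf₁c.intervalIntegrable 0 x) (hfII 0 x), hFTC, hv₁0, hD]
      ring
    have hT1 : ‖u x * E x - u₁ x * E₁ x‖ ≤ M * ε + ε := by
      have he : u x * E x - u₁ x * E₁ x = u x * (E x - E₁ x) + (u x - u₁ x) * E₁ x := by ring
      rw [he]
      have h1 : ‖u x * (E x - E₁ x)‖ ≤ M * ε := by
        rw [norm_mul]
        refine mul_le_mul (hMu x hxK) ?_ (norm_nonneg _) hM0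
        rw [norm_sub_rev]; exact h_E x hxK
      have h2 : ‖(u x - u₁ x) * E₁ x‖ ≤ ε := by
        rw [norm_mul, h_E1, mul_one, norm_sub_rev]
        exact h_ub x hxK
      exact (norm_add_le _ _).trans (add_le_add h1 h2)
    have hpt : ∀ t ∈ K, ‖f₁ t - f t‖ ≤
        ‖gc t - g t‖ + ‖g t‖ * ε + ‖bc t - b t‖ * (M + 1) + ‖b t‖ * (ε * (1 + M)) := by
      intro t ht
      have hsp : f₁ t - f t = (gc t - g t) * E₁ t + g t * (E₁ t - E t)
          + ((bc t - b t : ℝ) : ℂ) * (u₁ t * E₁ t * I)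
          + ((b t : ℝ) : ℂ) * (((u₁ t - u t) * E₁ t + u t * (E₁ t - E t)) * I) := by
        simp only [hf₁, hf]
        push_cast
        ring
      rw [hsp]
      have n1 : ‖(gc t - g t) * E₁ t‖ = ‖gc t - g t‖ := by rw [norm_mul, h_E1, mul_one]
      have n2 : ‖g t * (E₁ t - E t)‖ ≤ ‖g t‖ * ε := by
        rw [norm_mul]
        exact mul_le_mul_of_nonneg_left (h_E t ht) (norm_nonneg _)
      have n3 : ‖((bc t - b t : ℝ) : ℂ) * (u₁ t * E₁ t * I)‖ ≤ ‖bc t - b t‖ * (M + 1) := by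
        rw [norm_mul, Complex.norm_real]
        refine mul_le_mul_of_nonneg_left ?_ (norm_nonneg _)
        rw [norm_mul, norm_mul, h_E1, Complex.norm_I, mul_one, mul_one]
        exact h_u1 t ht
      have n4 : ‖((b t : ℝ) : ℂ) * (((u₁ t - u t) * E₁ t + u t * (E₁ t - E t)) * I)‖ ≤
          ‖b t‖ * (ε * (1 + M)) := by
        rw [norm_mul, Complex.norm_real]
        refine mul_le_mul_of_nonneg_left ?_ (norm_nonneg _)
        rw [norm_mul, Complex.norm_I, mul_one]
        have m1 : ‖(u₁ t - u t) * E₁ t‖ ≤ ε := by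
          rw [norm_mul, h_E1, mul_one]; exact h_ub t ht
        have m2 : ‖u t * (E₁ t - E t)‖ ≤ M * ε := by
          rw [norm_mul]
          exact mul_le_mul (hMu t ht) (h_E t ht) (norm_nonneg _) hM0
        have := (norm_add_le ((u₁ t - u t) * E₁ t) (u t * (E₁ t - E t))).trans (add_le_add m1 m2)
        calc ‖(u₁ t - u t) * E₁ t + u t * (E₁ t - E t)‖ ≤ ε + M * ε := this
          _ = ε * (1 + M) := by ring
      calc ‖(gc t - g t) * E₁ t + g t * (E₁ t - E t)
            + ((bc t - b t : ℝ) : ℂ) * (u₁ t * E₁ t * I)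
            + ((b t : ℝ) : ℂ) * (((u₁ t - u t) * E₁ t + u t * (E₁ t - E t)) * I)‖
          ≤ ‖(gc t - g t) * E₁ t + g t * (E₁ t - E t)
            + ((bc t - b t : ℝ) : ℂ) * (u₁ t * E₁ t * I)‖
            + ‖((b t : ℝ) : ℂ) * (((u₁ t - u t) * E₁ t + u t * (E₁ t - E t)) * I)‖ :=
            norm_add_le _ _
        _ ≤ (‖(gc t - g t) * E₁ t + g t * (E₁ t - E t)‖
            + ‖((bc t - b t : ℝ) : ℂ) * (u₁ t * E₁ t * I)‖)
            + ‖((b t : ℝ) : ℂ) * (((u₁ t - u t) * E₁ t + u t * (E₁ t - E t)) * I)‖ := by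
            gcongr
            exact norm_add_le _ _
        _ ≤ ((‖(gc t - g t) * E₁ t‖ + ‖g t * (E₁ t - E t)‖)
            + ‖((bc t - b t : ℝ) : ℂ) * (u₁ t * E₁ t * I)‖)
            + ‖((b t : ℝ) : ℂ) * (((u₁ t - u t) * E₁ t + u t * (E₁ t - E t)) * I)‖ := by
            gcongr
            exact norm_add_le _ _
        _ ≤ ‖gc t - g t‖ + ‖g t‖ * ε + ‖bc t - b t‖ * (M + 1) + ‖b t‖ * (ε * (1 + M)) := by
            rw [n1]
            linarith [n2, n3, n4]
    have hint1 : IntegrableOn (fun t => f₁ t - f t) K volume :=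
      II_to_On ((hf₁c.intervalIntegrable 0 x).sub (hfII 0 x))
    have hi1 : IntegrableOn (fun t => ‖gc t - g t‖) K volume :=
      (II_to_On ((hgcc.intervalIntegrable 0 x).sub (hg 0 x))).norm
    have hi2 : IntegrableOn (fun t => ‖g t‖ * ε) K volume := hgK.norm.mul_const ε
    have hi3 : IntegrableOn (fun t => ‖bc t - b t‖ * (M + 1)) K volume :=
      (II_to_On ((hbcc.intervalIntegrable 0 x).sub (hb 0 x))).norm.mul_const _
    have hi4 : IntegrableOn (fun t => ‖b t‖ * (ε * (1 + M))) K volume := hbK.norm.mul_const _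
    have hT2 : ‖∫ t in (0:ℝ)..x, (f₁ t - f t)‖ ≤ ε + Mg * ε + ε * (M + 1) + Mb * (ε * (1 + M)) := by
      refine (norm_int_le hxK hint1).trans ?_
      have hiS : IntegrableOn (fun t => ‖gc t - g t‖ + ‖g t‖ * ε + ‖bc t - b t‖ * (M + 1)
          + ‖b t‖ * (ε * (1 + M))) K volume := ((hi1.add hi2).add hi3).add hi4
      have hi12 : IntegrableOn (fun t => ‖gc t - g t‖ + ‖g t‖ * ε) K volume := hi1.add hi2
      have hi123 : IntegrableOn (fun t => ‖gc t - g t‖ + ‖g t‖ * ε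
          + ‖bc t - b t‖ * (M + 1)) K volume := hi12.add hi3
      refine (setIntegral_mono_on hint1.norm hiS hKmeas hpt).trans ?_
      rw [integral_add hi123 hi4, integral_add hi12 hi3, integral_add hi1 hi2]
      have e1 : ∫ t in K, ‖gc t - g t‖ ≤ ε := by
        have : ∫ t in K, ‖gc t - g t‖ = ∫ t in K, ‖g t - gc t‖ :=
          setIntegral_congr_fun hKmeas fun t _ => norm_sub_rev _ _
        rw [this]; exact hgce
      have e2 : ∫ t in K, ‖g t‖ * ε = Mg * ε := by rw [integral_mul_const]
      have e3 : ∫ t in K, ‖bc t - b t‖ * (M + 1) ≤ ε * (M + 1) := by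
        rw [integral_mul_const]
        refine mul_le_mul_of_nonneg_right ?_ (by linarith)
        have : ∫ t in K, ‖bc t - b t‖ = ∫ t in K, ‖b t - bc t‖ :=
          setIntegral_congr_fun hKmeas fun t _ => norm_sub_rev _ _
        rw [this]; exact hbce
      have e4 : ∫ t in K, ‖b t‖ * (ε * (1 + M)) = Mb * (ε * (1 + M)) := by
        rw [integral_mul_const]
      rw [e2, e4]
      linarith
    calc ‖D‖ ≤ ‖u x * E x - u₁ x * E₁ x‖ + ‖∫ t in (0:ℝ)..x, (f₁ t - f t)‖ := by
          rw [hsplit]; exact norm_add_le _ _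
      _ ≤ (M * ε + ε) + (ε + Mg * ε + ε * (M + 1) + Mb * (ε * (1 + M))) := add_le_add hT1 hT2
      _ = ε * C := by rw [hC]; ring
  have hD0 : D = 0 := by
    by_contra hne
    have hpos : 0 < ‖D‖ := norm_pos_iff.2 hne
    set ε : ℝ := min 1 (‖D‖ / (2 * (C + 1))) with hεd
    have hCp : (0:ℝ) < 2 * (C + 1) := by linarith
    have hε0 : 0 < ε := lt_min one_pos (div_pos hpos hCp)
    have hε1 : ε ≤ 1 := min_le_left _ _
    have h1 := claim ε hε0 hε1
    have h2 : ε * C ≤ (‖D‖ / (2 * (C + 1))) * C :=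
      mul_le_mul_of_nonneg_right (min_le_right _ _) hC0
    have h3 : (‖D‖ / (2 * (C + 1))) * C < ‖D‖ := by
      rw [div_mul_eq_mul_div, div_lt_iff₀ hCp]
      nlinarith
    exact lt_irrefl _ (h1.trans_lt (h2.trans_lt h3))
  rw [hD] at hD0
  exact sub_eq_zero.mp hD0

end GaugeAux

namespace GaugeAux

open Complex (I)

lemma absE (r : ℝ) : ‖Complex.exp (I * (r : ℂ))‖ = 1 := by
  exact normE r

set_option maxHeartbeats 800000 in
/-- Gauging transfers admissible pairs for potential `A₁` to admissible pairs for `A₂`. -/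
lemma transfer (q : ℝ) (A₁ A₂ : ℝ → ℝ)
    (h₁ : ∀ a c : ℝ, IntervalIntegrable A₁ volume a c)
    (h₂ : ∀ a c : ℝ, IntervalIntegrable A₂ volume a c)
    (hzero : ∀ t : ℝ, (∫ s in t..(t + 2 * π), (A₁ s - A₂ s)) = 0) :
    { c : ℝ | ∃ u g : ℝ → ℂ, PeriodicAC u g ∧ u ≠ 0 ∧
      IntervalIntegrable (fun x => ‖g x + Complex.I * A₁ x * u x‖ ^ 2)
        volume 0 (2 * π) ∧
      c = ratio q A₁ u g } ⊆
    { c : ℝ | ∃ u g : ℝ → ℂ, PeriodicAC u g ∧ u ≠ 0 ∧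
      IntervalIntegrable (fun x => ‖g x + Complex.I * A₂ x * u x‖ ^ 2)
        volume 0 (2 * π) ∧
      c = ratio q A₂ u g } := by
  rintro c ⟨u, g, ⟨huper, hgII, hurep⟩, hune, hL2, hcr⟩
  set b : ℝ → ℝ := fun t => A₁ t - A₂ t with hbdef
  have hb : ∀ a c : ℝ, IntervalIntegrable b volume a c := fun a c => (h₁ a c).sub (h₂ a c)
  set B : ℝ → ℝ := fun t => ∫ s in (0:ℝ)..t, b s with hB
  set E : ℝ → ℂ := fun t => Complex.exp (I * (B t : ℂ)) with hE
  have hBc : Continuous B := intervalIntegral.continuous_primitive hb 0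
  have hEc : Continuous E :=
    Complex.continuous_exp.comp (continuous_const.mul (Complex.continuous_ofReal.comp hBc))
  have huc : Continuous u :=
    (continuous_const.add (intervalIntegral.continuous_primitive hgII 0)).congr
      fun y => (hurep y).symm
  have hBper : ∀ t, B (t + 2 * π) = B t := by
    intro t
    have h1 := intervalIntegral.integral_add_adjacent_intervals (hb 0 t) (hb t (t + 2 * π))
    have h2 : (∫ s in t..(t + 2 * π), b s) = 0 := hzero t
    simp only [hB]
    rw [← h1, h2, add_zero]
  have hEper : ∀ t, E (t + 2 * π) = E t := fun t => by simp only [hE, hBper t]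
  have hE1 : ∀ t, ‖E t‖ = 1 := fun t => absE (B t)
  set v : ℝ → ℂ := fun t => u t * E t with hv
  set gv : ℝ → ℂ := fun t => (g t + I * b t * u t) * E t with hgv
  have hvper : Function.Periodic v (2 * π) := fun t => by
    simp only [hv]
    rw [huper t, hEper t]
  have hgvII : ∀ a c : ℝ, IntervalIntegrable gv volume a c := gvII hgII huc hb hEc
  have hvrep : ∀ x : ℝ, v x = v 0 + ∫ t in (0:ℝ)..x, gv t := by
    intro x
    have h0 : v 0 = u 0 := by
      simp [hv, hE, hB, intervalIntegral.integral_same]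
    rw [h0]
    simpa only [hv, hE, hB, hgv] using gauge_key u g hgII hurep b hb x
  have hvne : v ≠ 0 := by
    intro h0
    apply hune
    funext t
    have ht := congrFun h0 t
    simp only [hv, Pi.zero_apply] at ht
    rcases mul_eq_zero.mp ht with h | h
    · simpa using h
    · exact absurd h (Complex.exp_ne_zero _)
  have habs : ∀ t, ‖gv t + Complex.I * A₂ t * v t‖
      = ‖g t + Complex.I * A₁ t * u t‖ := by
    intro t
    have he : gv t + Complex.I * A₂ t * v t = (g t + Complex.I * A₁ t * u t) * E t := by
      simp only [hgv, hv, hbdef]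
      push_cast
      ring
    rw [he, norm_mul, hE1, mul_one]
  have hvabs : ∀ t, ‖v t‖ = ‖u t‖ := by
    intro t
    simp only [hv]
    rw [norm_mul, hE1, mul_one]
  have hr : ratio q A₂ v gv = ratio q A₁ u g := by
    unfold ratio
    rw [intervalIntegral.integral_congr
        (f := fun x => ‖gv x + Complex.I * A₂ x * v x‖ ^ 2)
        (g := fun x => ‖g x + Complex.I * A₁ x * u x‖ ^ 2)
        (fun t _ => by simp only [habs t]),
      intervalIntegral.integral_congr
        (f := fun x => ‖v x‖ ^ q)
        (g := fun x => ‖u x‖ ^ q)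
        (fun t _ => by simp only [hvabs t])]
  refine ⟨v, gv, ⟨hvper, hgvII, hvrep⟩, hvne, ?_, hcr.trans hr.symm⟩
  have heq : (fun x => ‖gv x + Complex.I * A₂ x * v x‖ ^ 2)
      = fun x => ‖g x + Complex.I * A₁ x * u x‖ ^ 2 :=
    funext fun t => by rw [habs t]
  rw [heq]
  exact hL2

end GaugeAux

open GaugeAux in
open Complex (I) in
set_option maxHeartbeats 800000 in
/-- Gauge transformation. -/
theorem gauge_transformation (q : ℝ) (hq : 1 ≤ q) (A : ℝ → ℝ)
    (hA : Function.Periodic A (2 * π)) (hAint : IntervalIntegrable A volume 0 (2 * π))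
    (α : ℝ) (hα : α = (1 / (2 * π)) * ∫ t in (0:ℝ)..(2 * π), A t)
    (u g : ℝ → ℂ) (hu : PeriodicAC u g)
    (v : ℝ → ℂ)
    (hv : ∀ x, v x = u x * Complex.exp (Complex.I * ((∫ t in (0:ℝ)..x, (A t - α)) : ℝ))) :
    (∃ gv : ℝ → ℂ, PeriodicAC v gv ∧
      (∫ x in (0:ℝ)..(2 * π), ‖gv x + Complex.I * α * v x‖ ^ 2) =
        ∫ x in (0:ℝ)..(2 * π), ‖g x + Complex.I * A x * u x‖ ^ 2) ∧
    (∀ x, ‖v x‖ = ‖u x‖) ∧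
    mu q A = mu q (fun _ => α) := by
  obtain ⟨huper, hgII, hurep⟩ := hu
  have hAall : ∀ a c : ℝ, IntervalIntegrable A volume a c :=
    per_II Real.two_pi_pos hA hAint
  have hconst : ∀ a c : ℝ, IntervalIntegrable (fun _ : ℝ => α) volume a c :=
    fun a c => intervalIntegrable_const
  have hπ : (2 : ℝ) * π ≠ 0 := ne_of_gt Real.two_pi_pos
  have hint0 : (∫ s in (0:ℝ)..(2 * π), (A s - α)) = 0 := by
    rw [intervalIntegral.integral_sub hAint intervalIntegrable_const,
      intervalIntegral.integral_const, smul_eq_mul, hα]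
    field_simp
    ring
  have hperb : Function.Periodic (fun s => A s - α) (2 * π) := fun s => by
    simp only
    rw [hA s]
  have hzero₁ : ∀ t : ℝ, (∫ s in t..(t + 2 * π), (A s - α)) = 0 := by
    intro t
    rw [hperb.intervalIntegral_add_eq t 0]
    simpa using hint0
  have hzero₂ : ∀ t : ℝ, (∫ s in t..(t + 2 * π), ((fun _ : ℝ => α) s - A s)) = 0 := by
    intro t
    have h1 : (∫ s in t..(t + 2 * π), ((fun _ : ℝ => α) s - A s))
        = -∫ s in t..(t + 2 * π), (A s - α) := by
      rw [← intervalIntegral.integral_neg]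
      exact intervalIntegral.integral_congr fun s _ => by simp
    rw [h1, hzero₁ t, neg_zero]
  set b : ℝ → ℝ := fun t => A t - α with hbdef
  have hb : ∀ a c : ℝ, IntervalIntegrable b volume a c :=
    fun a c => (hAall a c).sub intervalIntegrable_const
  set B : ℝ → ℝ := fun t => ∫ s in (0:ℝ)..t, (A s - α) with hB
  set E : ℝ → ℂ := fun t => Complex.exp (Complex.I * (B t : ℂ)) with hE
  have hBc : Continuous B := intervalIntegral.continuous_primitive hb 0
  have hEc : Continuous E :=
    Complex.continuous_exp.comp (continuous_const.mul (Complex.continuous_ofReal.comp hBc))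
  have huc : Continuous u :=
    (continuous_const.add (intervalIntegral.continuous_primitive hgII 0)).congr
      fun y => (hurep y).symm
  have hv' : ∀ x, v x = u x * E x := fun x => hv x
  have hBper : ∀ t, B (t + 2 * π) = B t := by
    intro t
    have h1 := intervalIntegral.integral_add_adjacent_intervals (hb 0 t) (hb t (t + 2 * π))
    have h2 : (∫ s in t..(t + 2 * π), b s) = 0 := hzero₁ t
    simp only [hB]
    rw [← h1]
    simp only [hbdef] at h2
    rw [h2, add_zero]
  have hEper : ∀ t, E (t + 2 * π) = E t := fun t => by simp only [hE, hBper t]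
  have hE1 : ∀ t, ‖E t‖ = 1 := fun t => absE (B t)
  set gv : ℝ → ℂ := fun t => (g t + Complex.I * b t * u t) * E t with hgv
  have hgvII : ∀ a c : ℝ, IntervalIntegrable gv volume a c := gvII hgII huc hb hEc
  have hvrep : ∀ x : ℝ, v x = v 0 + ∫ t in (0:ℝ)..x, gv t := by
    intro x
    have h0 : v 0 = u 0 := by
      rw [hv' 0]
      simp [hE, hB, intervalIntegral.integral_same]
    rw [h0, hv' x]
    simpa only [hE, hB, hgv] using gauge_key u g hgII hurep b hb x
  have habs : ∀ t, ‖gv t + Complex.I * α * v t‖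
      = ‖g t + Complex.I * A t * u t‖ := by
    intro t
    have he : gv t + Complex.I * α * v t = (g t + Complex.I * A t * u t) * E t := by
      rw [hv' t]
      simp only [hgv, hbdef]
      push_cast
      ring
    rw [he, norm_mul, hE1, mul_one]
  refine ⟨⟨gv, ⟨?_, hgvII, hvrep⟩, ?_⟩, ?_, ?_⟩
  · intro t
    rw [hv' (t + 2 * π), hv' t, huper t, hEper t]
  · exact intervalIntegral.integral_congr fun t _ => by rw [habs t]
  · intro x
    rw [hv' x, norm_mul, hE1, mul_one]
  · have hsub1 := transfer q A (fun _ => α) hAall hconst (fun t => hzero₁ t)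
    have hsub2 := transfer q (fun _ => α) A hconst hAall hzero₂
    unfold mu
    exact congrArg sInf (Set.Subset.antisymm hsub1 hsub2)
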